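/- Let ω be a cyclic de Bruijn word of order n over Σ and let r > n, with L = r − n. Then the total-variation (L¹) distance between the cyclic window distribution ρ_ω^{(r)} and its project–lift rollout satisfies ‖ρ_ω^{(r)} − ρ̃‖₁ = 2(1 − s^{n−r}) = 2(1 − s^{−L}). -/

import Mathlib

/-!
Project–lift diagnostics.

Fix a finite alphabet `σ` with `s = |σ| ≥ 2` and integers `r > n ≥ 1`; we write
`n = m + 1` (contexts have length `m = n − 1`) and `r = m + 1 + L` (`L = r − n` is the
hidden extra depth; for `r = n` take `L = 0`).  A distribution `ρ` on `Σ^r` is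
shift-stationary at order `≤ n` if all its contiguous length-`n` marginals coincide.
`ngramMarg ρ` is its length-`n` marginal (at offset `0`), `ctxMarg ρ` the induced
length-`(n−1)` marginal, `plContLaw ρ a c = ρ_n(c·a)/ρ_{n−1}(c)` the induced order-`n`
continuation law, and `rollout ρ` the project–lift rollout
`ρ̃(x_1⋯x_r) = ρ_n(x_1⋯x_n) · ∏_{t=n+1}^r p(x_t | x_{t−n+1}⋯x_{t−1})`.
KL divergences are in bits.
-/

open Finset

variable {σ : Type*}

/-- The length-`len` window at offset `t` of a string of length `r = m + 1 + L`. -/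
def win (m L len t : ℕ) (h : t + len ≤ m + 1 + L)
    (x : Fin (m + 1 + L) → σ) : Fin len → σ :=
  fun i => x ⟨t + i.val, by have := i.isLt; omega⟩

/-- The contiguous length-`len` marginal at offset `t` of a distribution on `Σ^r`. -/
noncomputable def marg [Fintype σ] [DecidableEq σ] (m L len t : ℕ)
    (h : t + len ≤ m + 1 + L) (ρ : (Fin (m + 1 + L) → σ) → ℝ)
    (u : Fin len → σ) : ℝ :=
  ∑ x : Fin (m + 1 + L) → σ, if win m L len t h x = u then ρ x else 0

/-- A distribution on sequences: nonnegative and summing to `1`. -/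
def IsDistOn [Fintype σ] [DecidableEq σ] {ι : Type*} [Fintype ι] [DecidableEq ι]
    (ρ : (ι → σ) → ℝ) : Prop :=
  (∀ x, 0 ≤ ρ x) ∧ ∑ x, ρ x = 1

/-- Shift-stationarity at order `≤ n` (`n = m+1`): all contiguous length-`n`
marginals coincide. -/
def ShiftStationary [Fintype σ] [DecidableEq σ] (m L : ℕ)
    (ρ : (Fin (m + 1 + L) → σ) → ℝ) : Prop :=
  ∀ (t₁ t₂ : ℕ) (h₁ : t₁ + (m + 1) ≤ m + 1 + L) (h₂ : t₂ + (m + 1) ≤ m + 1 + L),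
    marg m L (m + 1) t₁ h₁ ρ = marg m L (m + 1) t₂ h₂ ρ

/-- The common length-`n` marginal `ρ_n` (computed at offset `0`). -/
noncomputable def ngramMarg [Fintype σ] [DecidableEq σ] (m L : ℕ)
    (ρ : (Fin (m + 1 + L) → σ) → ℝ) : (Fin (m + 1) → σ) → ℝ :=
  marg m L (m + 1) 0 (by omega) ρ

/-- The induced length-`(n−1)` (context) marginal `ρ_{n−1}`. -/
noncomputable def ctxMarg [Fintype σ] [DecidableEq σ] (m L : ℕ)
    (ρ : (Fin (m + 1 + L) → σ) → ℝ) (c : Fin m → σ) : ℝ :=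
  ∑ a, ngramMarg m L ρ (Fin.snoc c a)

/-- The induced order-`n` continuation law `p(a | c) = ρ_n(c·a)/ρ_{n−1}(c)`. -/
noncomputable def plContLaw [Fintype σ] [DecidableEq σ] (m L : ℕ)
    (ρ : (Fin (m + 1 + L) → σ) → ℝ) (a : σ) (c : Fin m → σ) : ℝ :=
  ngramMarg m L ρ (Fin.snoc c a) / ctxMarg m L ρ c

/-- The project–lift rollout
`ρ̃(x_1⋯x_r) = ρ_n(x_1⋯x_n) · ∏_{t=n+1}^r p(x_t | x_{t−n+1}⋯x_{t−1})`. -/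
noncomputable def rollout [Fintype σ] [DecidableEq σ] (m L : ℕ)
    (ρ : (Fin (m + 1 + L) → σ) → ℝ) : (Fin (m + 1 + L) → σ) → ℝ :=
  fun x =>
    ngramMarg m L ρ (win m L (m + 1) 0 (by omega) x) *
      ∏ t : Fin L,
        plContLaw m L ρ (x ⟨m + 1 + t.val, by have := t.isLt; omega⟩)
          (win m L m (t.val + 1) (by have := t.isLt; omega) x)

/-- Kullback–Leibler divergence in bits (with the convention `0·log 0 = 0`). -/
noncomputable def klBits {X : Type*} [Fintype X] (μ ν : X → ℝ) : ℝ :=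
  ∑ x, μ x * Real.logb 2 (μ x / ν x)

/-- The distribution `ρ_ω^{(r)}` on `Σ^r` (`r = m+1+L`): uniform on the `s^n` cyclic
length-`r` windows of the cyclic word `ω` of length `s^n` (`n = m+1`), one window
starting at each position `i < s^n`. -/
noncomputable def cyclicWindowDist [Fintype σ] [DecidableEq σ] (m L : ℕ)
    (ω : ℕ → σ) : (Fin (m + 1 + L) → σ) → ℝ :=
  fun g =>
    (∑ i ∈ Finset.range (Fintype.card σ ^ (m + 1)),
      if ∀ t : Fin (m + 1 + L), ω (i + (t : ℕ)) = g t then (1 : ℝ) else 0) /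
      (Fintype.card σ ^ (m + 1) : ℝ)

/-- `ω` is a cyclic de Bruijn word of order `n = m+1`: it has period `s^n` and every
`n`-gram appears exactly once among its `s^n` cyclic length-`n` windows. -/
def IsDeBruijnWord [Fintype σ] [DecidableEq σ] (m : ℕ) (ω : ℕ → σ) : Prop :=
  (∀ i, ω (i + Fintype.card σ ^ (m + 1)) = ω i) ∧
  (∀ g : Fin (m + 1) → σ, ∃! i, i < Fintype.card σ ^ (m + 1) ∧
    ∀ t : Fin (m + 1), ω (i + (t : ℕ)) = g t)

/-!
Since every `n`-gram occurs exactly once among the windows of `ω`, the `n`-gram marginal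
of `ρ_ω` is uniform; hence the continuation law is uniform and the rollout is the uniform
distribution on `Σ^r`.  The same uniqueness makes the `s^n` length-`r` windows of `ω`
pairwise distinct, so `ρ_ω` is uniform on a set of `s^n` words, and the `L¹` distance
between the uniform laws on a set of size `K` and on an ambient set of size `N` is
`2 (1 - K / N)`.
-/

theorem sum_abs_uniformOn_sub_uniform {α : Type*} [Fintype α] [DecidableEq α]
    (S : Finset α) (hS : S.Nonempty) :
    ∑ x, |(if x ∈ S then (#S : ℝ)⁻¹ else 0) - (Fintype.card α : ℝ)⁻¹| =
      2 * (1 - #S / Fintype.card α) := by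
  have hS₀ : (0 : ℝ) < #S := by exact_mod_cast hS.card_pos
  have hSα : (#S : ℝ) ≤ Fintype.card α := by exact_mod_cast S.card_le_univ
  have hα : (0 : ℝ) < Fintype.card α := hS₀.trans_le hSα
  have hgap : 0 ≤ (#S : ℝ)⁻¹ - (Fintype.card α : ℝ)⁻¹ :=
    sub_nonneg.mpr (inv_anti₀ hS₀ hSα)
  have hin : ∑ x ∈ S, |(if x ∈ S then (#S : ℝ)⁻¹ else 0) - (Fintype.card α : ℝ)⁻¹| =
      #S * ((#S : ℝ)⁻¹ - (Fintype.card α : ℝ)⁻¹) := by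
    rw [sum_congr rfl fun x hx => by rw [if_pos hx, abs_of_nonneg hgap],
      sum_const, nsmul_eq_mul]
  have hout : ∑ x ∈ Sᶜ, |(if x ∈ S then (#S : ℝ)⁻¹ else 0) - (Fintype.card α : ℝ)⁻¹| =
      (Fintype.card α - #S) * (Fintype.card α : ℝ)⁻¹ := by
    rw [sum_congr rfl fun x hx => by
        rw [if_neg (mem_compl.mp hx), zero_sub, abs_neg, abs_of_nonneg (inv_nonneg.mpr hα.le)],
      sum_const, nsmul_eq_mul, card_compl, Nat.cast_sub S.card_le_univ]
  rw [← sum_add_sum_compl S, hin, hout]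
  field_simp
  ring

theorem card_filter_eq_ite_mem_image_of_injOn {ι β : Type*} [DecidableEq β] {s : Finset ι}
    {f : ι → β} (hf : Set.InjOn f s) (y : β) :
    #{i ∈ s | f i = y} = if y ∈ s.image f then 1 else 0 := by
  split_ifs with hy
  · obtain ⟨i, hi, rfl⟩ := mem_image.mp hy
    refine card_eq_one.mpr ⟨i, ext fun j => ?_⟩
    simp only [mem_filter, mem_singleton]
    exact ⟨fun ⟨hj, hji⟩ => hf hj hi hji, by rintro rfl; exact ⟨hi, rfl⟩⟩
  · exact card_eq_zero.mpr <| filter_eq_empty_iff.mpr fun i hi hiy =>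
      hy (mem_image.mpr ⟨i, hi, hiy⟩)

section Rollout

variable [Fintype σ] [DecidableEq σ] [Nonempty σ] {m L : ℕ} {ρ : (Fin (m + 1 + L) → σ) → ℝ}

theorem plContLaw_eq_inv_card
    (hρ : ∀ g, ngramMarg m L ρ g = ((Fintype.card σ : ℝ) ^ (m + 1))⁻¹)
    (a : σ) (c : Fin m → σ) : plContLaw m L ρ a c = (Fintype.card σ : ℝ)⁻¹ := by
  have hs : (Fintype.card σ : ℝ) ≠ 0 := by exact_mod_cast Fintype.card_ne_zero
  simp only [plContLaw, ctxMarg, hρ, sum_const, card_univ, nsmul_eq_mul]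
  field_simp

theorem rollout_eq_inv_card_pow
    (hρ : ∀ g, ngramMarg m L ρ g = ((Fintype.card σ : ℝ) ^ (m + 1))⁻¹)
    (x : Fin (m + 1 + L) → σ) :
    rollout m L ρ x = ((Fintype.card σ : ℝ) ^ (m + 1 + L))⁻¹ := by
  simp only [rollout, hρ, plContLaw_eq_inv_card hρ, prod_const, card_univ, Fintype.card_fin]
  rw [← inv_pow, ← pow_add, inv_pow]

end Rollout

section WordWindows

variable [Fintype σ] [DecidableEq σ]

def wordWindow (ω : ℕ → σ) (len i : ℕ) : Fin len → σ := fun t => ω (i + t)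

theorem IsDeBruijnWord.existsUnique_wordWindow_eq {m : ℕ} {ω : ℕ → σ}
    (hω : IsDeBruijnWord m ω) (g : Fin (m + 1) → σ) :
    ∃! i, i < Fintype.card σ ^ (m + 1) ∧ wordWindow ω (m + 1) i = g := by
  simpa only [wordWindow, funext_iff] using hω.2 g

theorem IsDeBruijnWord.injOn_wordWindow {m len : ℕ} {ω : ℕ → σ} (hω : IsDeBruijnWord m ω)
    (hlen : m + 1 ≤ len) :
    Set.InjOn (wordWindow ω len) (range (Fintype.card σ ^ (m + 1))) := by
  intro i hi j hj hij
  have hprefix : wordWindow ω (m + 1) i = wordWindow ω (m + 1) j :=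
    funext fun t => congr_fun hij ⟨t, by omega⟩
  exact (hω.existsUnique_wordWindow_eq _).unique ⟨mem_range.mp hi, hprefix⟩
    ⟨mem_range.mp hj, rfl⟩

theorem cyclicWindowDist_eq_card_filter (m L : ℕ) (ω : ℕ → σ) (x : Fin (m + 1 + L) → σ) :
    cyclicWindowDist m L ω x =
      #{i ∈ range (Fintype.card σ ^ (m + 1)) | wordWindow ω (m + 1 + L) i = x} /
        (Fintype.card σ ^ (m + 1) : ℝ) := by
  simp only [cyclicWindowDist, sum_boole, wordWindow, funext_iff]

theorem ngramMarg_cyclicWindowDist_eq_card_filter (m L : ℕ) (ω : ℕ → σ) (g : Fin (m + 1) → σ) :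
    ngramMarg m L (cyclicWindowDist m L ω) g =
      #{i ∈ range (Fintype.card σ ^ (m + 1)) | wordWindow ω (m + 1) i = g} /
        (Fintype.card σ ^ (m + 1) : ℝ) := by
  have hprefix : ∀ i, win m L (m + 1) 0 (by omega) (wordWindow ω (m + 1 + L) i) =
      wordWindow ω (m + 1) i := fun i => funext fun t => by simp [win, wordWindow]
  simp only [ngramMarg, marg, cyclicWindowDist_eq_card_filter, ← sum_filter, ← sum_div]
  rw [← Nat.cast_sum, sum_card_fiberwise_eq_card_filter]
  simp only [mem_filter, mem_univ, true_and, hprefix]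

theorem IsDeBruijnWord.ngramMarg_cyclicWindowDist {m : ℕ} {ω : ℕ → σ}
    (hω : IsDeBruijnWord m ω) (L : ℕ) (g : Fin (m + 1) → σ) :
    ngramMarg m L (cyclicWindowDist m L ω) g = ((Fintype.card σ : ℝ) ^ (m + 1))⁻¹ := by
  obtain ⟨i, ⟨hi, hig⟩, -⟩ := hω.existsUnique_wordWindow_eq g
  rw [ngramMarg_cyclicWindowDist_eq_card_filter, card_filter_eq_ite_mem_image_of_injOn
    (hω.injOn_wordWindow le_rfl), if_pos (mem_image.mpr ⟨i, mem_range.mpr hi, hig⟩)]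
  simp

theorem IsDeBruijnWord.cyclicWindowDist_eq {m : ℕ} {ω : ℕ → σ} (hω : IsDeBruijnWord m ω)
    (L : ℕ) (x : Fin (m + 1 + L) → σ) :
    cyclicWindowDist m L ω x =
      letI S := (range (Fintype.card σ ^ (m + 1))).image (wordWindow ω (m + 1 + L))
      if x ∈ S then (#S : ℝ)⁻¹ else 0 := by
  have hinj := hω.injOn_wordWindow (len := m + 1 + L) (by omega)
  rw [cyclicWindowDist_eq_card_filter, card_filter_eq_ite_mem_image_of_injOn hinj,
    card_image_of_injOn hinj]
  split_ifs <;> simp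

end WordWindows

theorem deBruijn_l1_gap_general [Fintype σ] [DecidableEq σ]
    (m L : ℕ) (ω : ℕ → σ) (hω : IsDeBruijnWord m ω) :
    ∑ x : Fin (m + 1 + L) → σ,
        |cyclicWindowDist m L ω x - rollout m L (cyclicWindowDist m L ω) x| =
      2 * (1 - ((Fintype.card σ : ℝ) ^ L)⁻¹) := by
  have : Nonempty σ := ⟨ω 0⟩
  set S := (range (Fintype.card σ ^ (m + 1))).image (wordWindow ω (m + 1 + L))
  have hS : S.Nonempty := image_nonempty.mpr <| nonempty_range_iff.mpr <|
    pow_ne_zero _ Fintype.card_ne_zero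
  have hcard : #S = Fintype.card σ ^ (m + 1) :=
    (card_image_of_injOn (hω.injOn_wordWindow (len := m + 1 + L) (by omega))).trans
      (card_range _)
  have hrollout (x) : rollout m L (cyclicWindowDist m L ω) x =
      (Fintype.card (Fin (m + 1 + L) → σ) : ℝ)⁻¹ := by
    rw [rollout_eq_inv_card_pow (hω.ngramMarg_cyclicWindowDist L)]
    simp
  rw [sum_congr rfl fun x _ => by rw [hω.cyclicWindowDist_eq, hrollout],
    sum_abs_uniformOn_sub_uniform S hS, hcard, Fintype.card_fun, Fintype.card_fin]
  push_cast
  field_simp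
  ring

/-- Let `ω` be a cyclic de Bruijn word of order `n = m+1` over `σ`
and let `r = m+1+L > n`, with `L = r − n`.  Then the total-variation (`L¹`) distance
between the cyclic window distribution `ρ_ω^{(r)}` and its project–lift rollout `ρ̃`
satisfies `‖ρ_ω^{(r)} − ρ̃‖₁ = 2(1 − s^{n−r}) = 2(1 − s^{−L})`. -/
theorem deBruijn_l1_gap [Fintype σ] [DecidableEq σ]
    (m L : ℕ) (hL : 0 < L) (hs : 2 ≤ Fintype.card σ)
    (ω : ℕ → σ) (hω : IsDeBruijnWord m ω) :
    ∑ x : Fin (m + 1 + L) → σ,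
        |cyclicWindowDist m L ω x - rollout m L (cyclicWindowDist m L ω) x| =
      2 * (1 - ((Fintype.card σ : ℝ) ^ L)⁻¹) :=
  deBruijn_l1_gap_general m L ω hω
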